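/- Let G = (V, E, w) be a weighted graph, Δ > 0, and N ⊆ V a nonempty set with d_G(v, N) ≤ Δ for every v ∈ V. Let x ∈ N and 0 ≤ R ≤ Δ, and define the cone C = {v ∈ V : d_G(v, x) − d_G(v, N) ≤ R}. Then: (i) every v ∈ C satisfies d_G(v, x) ≤ 2Δ; (ii) for every v ∈ C, every vertex u with d_G(v, u) + d_G(u, x) = d_G(v, x) (i.e., u on a shortest path from v to x) belongs to C; consequently C has strong diameter at most 4Δ. -/
import Mathlib


open MeasureTheory

namespace Pad

variable {V : Type*}

/-- The weight of a walk: the sum of the weights of its edges. -/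
def walkWeight (w : Sym2 V → ℝ) {G : SimpleGraph V} {u v : V} (p : G.Walk u v) : ℝ :=
  (p.darts.map fun d => w d.edge).sum

/-- Shortest-path distance in the weighted graph `(G, w)`. -/
noncomputable def wdist (w : Sym2 V → ℝ) (G : SimpleGraph V) (u v : V) : ℝ :=
  sInf {x | ∃ p : G.Walk u v, x = walkWeight w p}

/-- Distance from a vertex to a set of vertices. -/
noncomputable def wdistSet (w : Sym2 V → ℝ) (G : SimpleGraph V) (v : V) (A : Set V) : ℝ :=
  sInf {x | ∃ a ∈ A, x = wdist w G v a}

/-- The closed ball of radius `r` around `v`. -/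
def ball (w : Sym2 V → ℝ) (G : SimpleGraph V) (v : V) (r : ℝ) : Set V :=
  {u | wdist w G v u ≤ r}

/-- Weight of a walk of an induced subgraph, measured with the weights of `G`. -/
def walkWeightI (w : Sym2 V → ℝ) {G : SimpleGraph V} {C : Set V} {u v : C}
    (p : (G.induce C).Walk u v) : ℝ :=
  (p.darts.map fun d => w (Sym2.map Subtype.val d.edge)).sum

/-- The cluster `C` has strong diameter at most `Δ`: every two vertices of `C` are joined,
inside the induced subgraph `G[C]`, by a walk of weight at most `Δ`. -/
def StronglyBounded (w : Sym2 V → ℝ) (G : SimpleGraph V) (C : Set V) (Δ : ℝ) : Prop :=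
  ∀ u v : C, ∃ p : (G.induce C).Walk u v, walkWeightI w p ≤ Δ

/-- A partition of `V`, given by the map `cl` sending a vertex to its cluster. -/
structure Partition (V : Type*) where
  cl : V → Set V
  mem_cl : ∀ v, v ∈ cl v
  cl_eq : ∀ u v, u ∈ cl v → cl u = cl v

/-- A partition is strongly `Δ`-bounded if each of its clusters has strong diameter at most `Δ`. -/
def Partition.StronglyBounded (w : Sym2 V → ℝ) (G : SimpleGraph V) (P : Partition V)
    (Δ : ℝ) : Prop :=
  ∀ v : V, Pad.StronglyBounded w G (P.cl v) Δ

/-- `(G, w)` has doubling dimension `ddim`: every ball of radius `2r` can be covered by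
`2 ^ ddim` balls of radius `r`. -/
def Doubling (w : Sym2 V → ℝ) (G : SimpleGraph V) (ddim : ℝ) : Prop :=
  ∀ (x : V) (r : ℝ), 0 < r → ∃ T : Set V, T.Finite ∧ ((T.ncard : ℝ) ≤ (2 : ℝ) ^ ddim) ∧
    ball w G x (2 * r) ⊆ ⋃ y ∈ T, ball w G y r

/-- `G` has the complete graph `K_r` as a minor: there are `r` pairwise disjoint connected
branch sets with an edge of `G` between any two of them. -/
def HasCliqueMinor (G : SimpleGraph V) (r : ℕ) : Prop :=
  ∃ B : Fin r → Set V,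
    (∀ i, (G.induce (B i)).Connected) ∧
    (Pairwise fun i j => Disjoint (B i) (B j)) ∧
    ∀ i j : Fin r, i ≠ j → ∃ u ∈ B i, ∃ v ∈ B j, G.Adj u v

/-- A shortest path: a path whose weight equals the distance between its endpoints. -/
def IsShortestPath (w : Sym2 V → ℝ) (G : SimpleGraph V) {u v : V} (p : G.Walk u v) : Prop :=
  p.IsPath ∧ walkWeight w p = wdist w G u v

/-- `G` has an `r`-core with radius `Δ`: there are at most `r` shortest paths such that every
vertex is within distance `Δ` of their union. -/
def HasCore (w : Sym2 V → ℝ) (G : SimpleGraph V) (r : ℕ) (Δ : ℝ) : Prop :=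
  ∃ r' : ℕ, r' ≤ r ∧ ∃ (a b : Fin r' → V) (p : ∀ i, G.Walk (a i) (b i)),
    (∀ i, IsShortestPath w G (p i)) ∧
    ∀ v : V, ∃ i, ∃ u ∈ (p i).support, wdist w G v u ≤ Δ

end Pad

namespace Pad

section Aux

variable {V : Type*} {w : Sym2 V → ℝ} {G : SimpleGraph V} {u v z : V}

lemma walkWeight_nonneg (hw : ∀ e, 0 ≤ w e) (p : G.Walk u v) : 0 ≤ walkWeight w p :=
  List.sum_nonneg fun x hx => by
    obtain ⟨d, _, rfl⟩ := List.mem_map.mp hx; exact hw _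

lemma walkWeight_cons {b : V} (h : G.Adj u b) (p : G.Walk b v) :
    walkWeight w (SimpleGraph.Walk.cons h p) = w s(u, b) + walkWeight w p := by
  simp [walkWeight, SimpleGraph.Walk.darts_cons, SimpleGraph.Dart.edge]

lemma walkWeight_append (p : G.Walk u z) (q : G.Walk z v) :
    walkWeight w (p.append q) = walkWeight w p + walkWeight w q := by
  simp [walkWeight, SimpleGraph.Walk.darts_append]

lemma walkWeight_reverse (p : G.Walk u v) :
    walkWeight w p.reverse = walkWeight w p := by
  simp [walkWeight, SimpleGraph.Walk.darts_reverse, List.map_reverse,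
    Function.comp_def, SimpleGraph.Dart.edge_symm, List.sum_reverse]

lemma wdist_set_nonempty (hG : G.Connected) (u v : V) :
    {x | ∃ p : G.Walk u v, x = walkWeight w p}.Nonempty :=
  (hG.preconnected u v).elim fun p => ⟨walkWeight w p, p, rfl⟩

lemma wdist_set_bddBelow (hw : ∀ e, 0 ≤ w e) :
    BddBelow {x | ∃ p : G.Walk u v, x = walkWeight w p} :=
  ⟨0, fun _ ⟨p, hp⟩ => hp ▸ walkWeight_nonneg hw p⟩

lemma wdist_le (hw : ∀ e, 0 ≤ w e) (p : G.Walk u v) :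
    wdist w G u v ≤ walkWeight w p :=
  csInf_le (wdist_set_bddBelow hw) ⟨p, rfl⟩

lemma wdist_nonneg (hw : ∀ e, 0 ≤ w e) (hG : G.Connected) (u v : V) :
    0 ≤ wdist w G u v :=
  le_csInf (wdist_set_nonempty hG u v) fun _ ⟨p, hp⟩ => hp ▸ walkWeight_nonneg hw p

lemma exists_path_le (hw : ∀ e, 0 ≤ w e) (p : G.Walk u v) :
    ∃ q : G.Walk u v, q.IsPath ∧ walkWeight w q ≤ walkWeight w p := by
  classical
  induction p with
  | nil => exact ⟨.nil, SimpleGraph.Walk.IsPath.nil, le_refl _⟩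
  | @cons a b c h p ih =>
    obtain ⟨q, hq, hle⟩ := ih
    by_cases ha : a ∈ q.support
    · refine ⟨q.dropUntil a ha, hq.dropUntil ha, ?_⟩
      have h1 : walkWeight w q
          = walkWeight w (q.takeUntil a ha) + walkWeight w (q.dropUntil a ha) := by
        conv_lhs => rw [← q.take_spec ha]
        exact walkWeight_append _ _
      have h2 : 0 ≤ walkWeight w (q.takeUntil a ha) := walkWeight_nonneg hw _
      rw [walkWeight_cons]
      nlinarith [hw s(a, b)]
    · refine ⟨.cons h q, (SimpleGraph.Walk.cons_isPath_iff h q).mpr ⟨hq, ha⟩, ?_⟩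
      rw [walkWeight_cons, walkWeight_cons]
      linarith

lemma exists_shortest [Fintype V] (hw : ∀ e, 0 ≤ w e) (hG : G.Connected) (u v : V) :
    ∃ p : G.Walk u v, p.IsPath ∧ walkWeight w p = wdist w G u v := by
  classical
  set S : Set ℝ := walkWeight w '' {p : G.Walk u v | p.IsPath ∧ p.length < Fintype.card V}
    with hS
  have hSfin : S.Finite := Set.Finite.image _ (Set.toFinite _)
  have hSne : S.Nonempty := by
    obtain ⟨p0⟩ := hG.preconnected u v
    obtain ⟨q, hq, _⟩ := exists_path_le hw p0
    exact ⟨walkWeight w q, ⟨q, ⟨hq, hq.length_lt⟩, rfl⟩⟩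
  obtain ⟨p, ⟨hp, _⟩, hpw⟩ := hSne.csInf_mem hSfin
  refine ⟨p, hp, le_antisymm ?_ (wdist_le hw p)⟩
  rw [hpw]
  refine le_csInf (wdist_set_nonempty hG u v) fun x ⟨q, hq⟩ => ?_
  obtain ⟨q', hq', hle⟩ := exists_path_le hw q
  calc sInf S ≤ walkWeight w q' :=
        csInf_le hSfin.bddBelow ⟨q', ⟨hq', hq'.length_lt⟩, rfl⟩
    _ ≤ x := hq ▸ hle

lemma wdist_triangle [Fintype V] (hw : ∀ e, 0 ≤ w e) (hG : G.Connected) (u z v : V) :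
    wdist w G u v ≤ wdist w G u z + wdist w G z v := by
  obtain ⟨p, _, hp⟩ := exists_shortest hw hG u z
  obtain ⟨q, _, hq⟩ := exists_shortest hw hG z v
  calc wdist w G u v ≤ walkWeight w (p.append q) := wdist_le hw _
    _ = _ := by rw [walkWeight_append, hp, hq]

variable {N : Set V}

lemma wdistSet_bddBelow (hw : ∀ e, 0 ≤ w e) (hG : G.Connected) (v : V) :
    BddBelow {x | ∃ a ∈ N, x = wdist w G v a} :=
  ⟨0, fun _ ⟨a, _, ha⟩ => ha ▸ wdist_nonneg hw hG v a⟩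

lemma wdistSet_le (hw : ∀ e, 0 ≤ w e) (hG : G.Connected) {a : V} (ha : a ∈ N) (v : V) :
    wdistSet w G v N ≤ wdist w G v a :=
  csInf_le (wdistSet_bddBelow hw hG v) ⟨a, ha, rfl⟩

lemma wdistSet_triangle [Fintype V] (hw : ∀ e, 0 ≤ w e) (hG : G.Connected)
    (hne : N.Nonempty) (v u : V) :
    wdistSet w G v N ≤ wdist w G v u + wdistSet w G u N := by
  rw [wdistSet, ← sub_le_iff_le_add']
  refine le_csInf ⟨_, hne.choose, hne.choose_spec, rfl⟩ fun b ⟨a, haN, hb⟩ => ?_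
  rw [sub_le_iff_le_add', hb]
  calc wdistSet w G v N ≤ wdist w G v a := wdistSet_le hw hG haN v
    _ ≤ wdist w G v u + wdist w G u a := wdist_triangle hw hG v u a

lemma support_dist [Fintype V] (hw : ∀ e, 0 ≤ w e) (hG : G.Connected) {v x u : V}
    {p : G.Walk v x} (hp : walkWeight w p = wdist w G v x) (hu : u ∈ p.support) :
    wdist w G v u + wdist w G u x = wdist w G v x := by
  classical
  have hsplit : walkWeight w p
      = walkWeight w (p.takeUntil u hu) + walkWeight w (p.dropUntil u hu) := by
    conv_lhs => rw [← p.take_spec hu]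
    exact walkWeight_append _ _
  have h1 : wdist w G v u ≤ walkWeight w (p.takeUntil u hu) := wdist_le hw _
  have h2 : wdist w G u x ≤ walkWeight w (p.dropUntil u hu) := wdist_le hw _
  have h3 := wdist_triangle hw hG v u x
  linarith

lemma exists_induced_walk {C : Set V} :
    ∀ {a b : V} (p : G.Walk a b), (∀ z ∈ p.support, z ∈ C) → ∀ (ha : a ∈ C) (hb : b ∈ C),
    ∃ q : (G.induce C).Walk ⟨a, ha⟩ ⟨b, hb⟩, walkWeightI w q = walkWeight w p := by
  intro a b p
  induction p with
  | nil => exact fun _ _ _ => ⟨.nil, rfl⟩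
  | @cons a c b h p ih =>
    intro hs ha hb
    have hc : c ∈ C := hs c (by simp [SimpleGraph.Walk.support_cons])
    obtain ⟨q, hq⟩ := ih (fun z hz => hs z (by simp [SimpleGraph.Walk.support_cons, hz])) hc hb
    have hadj : (G.induce C).Adj ⟨a, ha⟩ ⟨c, hc⟩ := h
    refine ⟨.cons hadj q, ?_⟩
    rw [walkWeight_cons]
    simp only [walkWeightI, SimpleGraph.Walk.darts_cons, List.map_cons, List.sum_cons]
    rw [← hq]
    rfl

end Aux

end Pad
/-- Cones in weighted graphs: for `x ∈ N` and `0 ≤ R ≤ Δ`, the cone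
`C = {v | d_G(v,x) - d_G(v,N) ≤ R}` satisfies (i) every `v ∈ C` has `d_G(v,x) ≤ 2Δ`,
(ii) `C` is closed under vertices on shortest paths towards `x`, and consequently `C` has
strong diameter at most `4Δ`. -/
theorem cone_strong_diameter
    (V : Type) [Fintype V] (G : SimpleGraph V) (hG : G.Connected)
    (w : Sym2 V → ℝ) (hw : ∀ e, 0 ≤ w e)
    (Δ : ℝ) (hΔ : 0 < Δ)
    (N : Set V) (hne : N.Nonempty)
    (hcov : ∀ v : V, Pad.wdistSet w G v N ≤ Δ)
    (x : V) (hx : x ∈ N) (R : ℝ) (hR0 : 0 ≤ R) (hRΔ : R ≤ Δ)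
    (C : Set V) (hC : C = {v | Pad.wdist w G v x - Pad.wdistSet w G v N ≤ R}) :
    (∀ v ∈ C, Pad.wdist w G v x ≤ 2 * Δ) ∧
    (∀ v ∈ C, ∀ u, Pad.wdist w G v u + Pad.wdist w G u x = Pad.wdist w G v x → u ∈ C) ∧
    Pad.StronglyBounded w G C (4 * Δ) := by
  subst hC
  have part1 : ∀ v ∈ {v | Pad.wdist w G v x - Pad.wdistSet w G v N ≤ R},
      Pad.wdist w G v x ≤ 2 * Δ := by
    intro v hv
    have h1 := hcov v
    have h2 : Pad.wdist w G v x - Pad.wdistSet w G v N ≤ R := hv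
    linarith
  have part2 : ∀ v ∈ {v | Pad.wdist w G v x - Pad.wdistSet w G v N ≤ R}, ∀ u,
      Pad.wdist w G v u + Pad.wdist w G u x = Pad.wdist w G v x →
      u ∈ {v | Pad.wdist w G v x - Pad.wdistSet w G v N ≤ R} := by
    intro v hv u hu
    have htri := Pad.wdistSet_triangle hw hG hne v u
    have h2 : Pad.wdist w G v x - Pad.wdistSet w G v N ≤ R := hv
    show Pad.wdist w G u x - Pad.wdistSet w G u N ≤ R
    linarith
  refine ⟨part1, part2, ?_⟩
  intro u v
  obtain ⟨p1, _, hp1⟩ := Pad.exists_shortest hw hG (u : V) x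
  obtain ⟨p2, _, hp2⟩ := Pad.exists_shortest hw hG (v : V) x
  have hsupp : ∀ z ∈ (p1.append p2.reverse).support,
      z ∈ {v | Pad.wdist w G v x - Pad.wdistSet w G v N ≤ R} := by
    intro z hz
    rw [SimpleGraph.Walk.mem_support_append_iff] at hz
    rcases hz with hz | hz
    · exact part2 _ u.2 z (Pad.support_dist hw hG hp1 hz)
    · rw [SimpleGraph.Walk.support_reverse, List.mem_reverse] at hz
      exact part2 _ v.2 z (Pad.support_dist hw hG hp2 hz)
  obtain ⟨q, hq⟩ := Pad.exists_induced_walk (p1.append p2.reverse) hsupp u.2 v.2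
  refine ⟨q, ?_⟩
  rw [hq, Pad.walkWeight_append, Pad.walkWeight_reverse, hp1, hp2]
  have h1 := part1 _ u.2
  have h2 := part1 _ v.2
  linarith
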